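/- arXiv:1903.11507 — 5 statements merged into one kernel-verified Lean document; each statement's English description precedes it below -/
import Mathlib

section
/- Let m ≥ 1, l > 0, velocities v_e > 0, weights p_e, c_e > 0 and rates η, η̃ > 0 for e = 1,…,m. Suppose f : ℝ₊ × [0,l] → ℝ^m is continuously differentiable and satisfies the advection equations ∂_t f_e(t,x) + v_e ∂_x f_e(t,x) = 0 for all e, t ≥ 0, x ∈ [0,l], and q : ℝ₊ → ℝ^m is continuously differentiable. Define the Lyapunov function V(t) = ∫₀^l Σ_{e=1}^m p_e e^{−ηx} f_e(t,x)² dx + Σ_{e=1}^m c_e e^{−η̃ v_e t} q_e(t)². If for every t ≥ 0 the boundary condition −Σ_{e=1}^m v_e p_e e^{−ηl} f_e(t,l)² + Σ_{e=1}^m v_e p_e f_e(t,0)² + 2 Σ_{e=1}^m q_e′(t) c_e e^{−η̃ v_e t} q_e(t) ≤ 0 holds, then V′(t) ≤ −ν V(t) for all t ≥ 0, where ν = min(η, η̃)·min_{e} v_e > 0. -/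
set_option maxHeartbeats 1000000

/-- Auxiliary: differentiation under the interval integral sign for a jointly
continuous derivative. -/
lemma aux_param_deriv_integral (g gt : ℝ → ℝ → ℝ) (l : ℝ)
    (hgcont : ∀ s, Continuous (fun x => g s x))
    (hgtcont : Continuous (fun pt : ℝ × ℝ => gt pt.1 pt.2))
    (hg_deriv : ∀ (s x : ℝ), HasDerivAt (fun u => g u x) (gt s x) s)
    (t₀ : ℝ) :
    HasDerivAt (fun s => ∫ x in (0:ℝ)..l, g s x) (∫ x in (0:ℝ)..l, gt t₀ x) t₀ := by
  have hK : IsCompact (Metric.closedBall t₀ 1 ×ˢ Set.uIcc (0:ℝ) l) :=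
    (isCompact_closedBall t₀ 1).prod isCompact_uIcc
  obtain ⟨C, hC⟩ := hK.exists_bound_of_continuousOn hgtcont.continuousOn
  refine (intervalIntegral.hasDerivAt_integral_of_dominated_loc_of_deriv_le
    (F := fun s x => g s x) (F' := fun s x => gt s x) (bound := fun _ => C)
    (Metric.ball_mem_nhds t₀ one_pos) ?_ ?_ ?_ ?_ ?_ ?_).2
  · exact Filter.Eventually.of_forall fun s => ((hgcont s).aestronglyMeasurable).restrict
  · exact (hgcont t₀).intervalIntegrable 0 l
  · exact (((hgtcont.comp (continuous_const.prodMk continuous_id)) :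
      Continuous fun x => gt t₀ x).aestronglyMeasurable).restrict
  · refine Filter.Eventually.of_forall fun x hx s hs => hC (s, x) ?_
    exact ⟨Metric.ball_subset_closedBall hs, Set.uIoc_subset_uIcc hx⟩
  · exact intervalIntegrable_const
  · exact Filter.Eventually.of_forall fun x _ s _ => hg_deriv s x

/-- Continuous Lyapunov decay lemma (Lemma 3.1): under the boundary condition,
the Lyapunov function `V` satisfies `V'(t) ≤ -ν V(t)` with `ν = min(η, η̃)·min_e v_e > 0`. -/
theorem continuous_lyapunov_decay
    (m : ℕ) (hm : 1 ≤ m) (l : ℝ) (hl : 0 < l)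
    (v p c : Fin m → ℝ) (hv : ∀ e, 0 < v e) (hp : ∀ e, 0 < p e) (hc : ∀ e, 0 < c e)
    (η ηt : ℝ) (hη : 0 < η) (hηt : 0 < ηt)
    (f : ℝ → ℝ → Fin m → ℝ) (q : ℝ → Fin m → ℝ)
    (hf : ∀ e, ContDiff ℝ 1 (fun pt : ℝ × ℝ => f pt.1 pt.2 e))
    (hq : ∀ e, ContDiff ℝ 1 (fun t => q t e))
    (hpde : ∀ e, ∀ t ≥ (0:ℝ), ∀ x ∈ Set.Icc (0:ℝ) l,
      deriv (fun s => f s x e) t + v e * deriv (fun y => f t y e) x = 0)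
    (V : ℝ → ℝ)
    (hV : V = fun t => (∫ x in (0:ℝ)..l, ∑ e, p e * Real.exp (-η * x) * (f t x e) ^ 2)
      + ∑ e, c e * Real.exp (-ηt * v e * t) * (q t e) ^ 2)
    (ν : ℝ) (hν : ν = min η ηt * ⨅ e, v e)
    (hbc : ∀ t ≥ (0:ℝ),
      -(∑ e, v e * p e * Real.exp (-η * l) * (f t l e) ^ 2)
      + (∑ e, v e * p e * (f t 0 e) ^ 2)
      + 2 * ∑ e, deriv (fun s => q s e) t * c e * Real.exp (-ηt * v e * t) * q t e ≤ 0) :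
    0 < ν ∧ ∀ t ≥ (0:ℝ), deriv V t ≤ -ν * V t := by
  haveI : Nonempty (Fin m) := ⟨⟨0, hm⟩⟩
  have hbddv : BddBelow (Set.range v) := (Set.finite_range v).bddBelow
  have hinf_le : ∀ e, (⨅ e, v e) ≤ v e := fun e => ciInf_le hbddv e
  obtain ⟨e0, he0⟩ : ∃ e, v e = ⨅ j, v j := exists_eq_ciInf_of_finite
  have hinf_pos : 0 < ⨅ e, v e := he0 ▸ hv e0
  have hνpos : 0 < ν := by rw [hν]; exact mul_pos (lt_min hη hηt) hinf_pos
  refine ⟨hνpos, ?_⟩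
  -- derivative of exponentials
  have hexp : ∀ (a x : ℝ), HasDerivAt (fun y : ℝ => Real.exp (a * y)) (a * Real.exp (a * x)) x := by
    intro a x
    have h : HasDerivAt (fun y : ℝ => a * y) (a * 1) x := (hasDerivAt_id x).const_mul a
    have h2 := h.exp
    convert h2 using 1
    ring
  -- partial derivatives of f
  set F : Fin m → ℝ × ℝ → ℝ := fun e pt => f pt.1 pt.2 e with hFdef
  have hFc : ∀ e, ContDiff ℝ 1 (F e) := hf
  set fT : Fin m → ℝ → ℝ → ℝ := fun e s x => fderiv ℝ (F e) (s, x) (1, 0) with hfTdef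
  set fX : Fin m → ℝ → ℝ → ℝ := fun e s x => fderiv ℝ (F e) (s, x) (0, 1) with hfXdef
  have hT : ∀ e (s x : ℝ), HasDerivAt (fun u => f u x e) (fT e s x) s := by
    intro e s x
    have h1 : HasFDerivAt (F e) (fderiv ℝ (F e) (s, x)) (s, x) :=
      ((hFc e).differentiable one_ne_zero (s, x)).hasFDerivAt
    have h2 : HasDerivAt (fun u : ℝ => (u, x)) ((1 : ℝ), (0 : ℝ)) s :=
      (hasDerivAt_id s).prodMk (hasDerivAt_const s x)
    exact h1.comp_hasDerivAt s h2
  have hX : ∀ e (s x : ℝ), HasDerivAt (fun y => f s y e) (fX e s x) x := by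
    intro e s x
    have h1 : HasFDerivAt (F e) (fderiv ℝ (F e) (s, x)) (s, x) :=
      ((hFc e).differentiable one_ne_zero (s, x)).hasFDerivAt
    have h2 : HasDerivAt (fun y : ℝ => (s, y)) ((0 : ℝ), (1 : ℝ)) x :=
      (hasDerivAt_const x s).prodMk (hasDerivAt_id x)
    exact h1.comp_hasDerivAt x h2
  have hfcont : ∀ e, Continuous (fun pt : ℝ × ℝ => f pt.1 pt.2 e) := fun e => (hFc e).continuous
  have hfTcont : ∀ e, Continuous (fun pt : ℝ × ℝ => fT e pt.1 pt.2) := by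
    intro e
    have h1 : Continuous (fun pt : ℝ × ℝ => fderiv ℝ (F e) pt) :=
      (hFc e).continuous_fderiv one_ne_zero
    have h2 : Continuous (fun pt : ℝ × ℝ => fderiv ℝ (F e) pt (1, 0)) :=
      h1.clm_apply continuous_const
    exact h2.comp (continuous_fst.prodMk continuous_snd)
  have hfXcont : ∀ e, Continuous (fun pt : ℝ × ℝ => fX e pt.1 pt.2) := by
    intro e
    have h1 : Continuous (fun pt : ℝ × ℝ => fderiv ℝ (F e) pt) :=
      (hFc e).continuous_fderiv one_ne_zero
    have h2 : Continuous (fun pt : ℝ × ℝ => fderiv ℝ (F e) pt (0, 1)) :=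
      h1.clm_apply continuous_const
    exact h2.comp (continuous_fst.prodMk continuous_snd)
  -- the PDE in terms of fT, fX
  have hpde' : ∀ e, ∀ t ≥ (0:ℝ), ∀ x ∈ Set.Icc (0:ℝ) l, fT e t x = -(v e) * fX e t x := by
    intro e t ht x hx
    have h1 := hpde e t ht x hx
    rw [(hT e t x).deriv, (hX e t x).deriv] at h1
    linarith
  have hexpc : Continuous fun x : ℝ => Real.exp (-η * x) :=
    Real.continuous_exp.comp (continuous_const.mul continuous_id)
  -- derivative under the integral sign
  have hg_deriv : ∀ (s x : ℝ),
      HasDerivAt (fun u => ∑ e, p e * Real.exp (-η * x) * f u x e ^ 2)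
        (∑ e, p e * Real.exp (-η * x) * (2 * f s x e * fT e s x)) s := by
    intro s x
    apply HasDerivAt.fun_sum
    intro e _
    have h := ((hT e s x).pow 2).const_mul (p e * Real.exp (-η * x))
    refine h.congr_deriv ?_
    push_cast
    ring
  have hgtcont : Continuous (fun pt : ℝ × ℝ =>
      ∑ e, p e * Real.exp (-η * pt.2) * (2 * f pt.1 pt.2 e * fT e pt.1 pt.2)) := by
    apply continuous_finset_sum
    intro e _
    exact (continuous_const.mul (Real.continuous_exp.comp (continuous_const.mul
      continuous_snd))).mul ((continuous_const.mul (hfcont e)).mul (hfTcont e))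
  have hgcont : ∀ s, Continuous (fun x => ∑ e, p e * Real.exp (-η * x) * f s x e ^ 2) := by
    intro s
    apply continuous_finset_sum
    intro e _
    exact (continuous_const.mul (Real.continuous_exp.comp (continuous_const.mul
      continuous_id))).mul (((hfcont e).comp (continuous_const.prodMk continuous_id)).pow 2)
  intro t ht
  have hIded : HasDerivAt (fun s => ∫ x in (0:ℝ)..l, ∑ e, p e * Real.exp (-η * x) * f s x e ^ 2)
      (∫ x in (0:ℝ)..l, ∑ e, p e * Real.exp (-η * x) * (2 * f t x e * fT e t x)) t :=
    aux_param_deriv_integral _ _ l hgcont hgtcont hg_deriv t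
  -- continuity in x at fixed time t
  have hXcont : ∀ e, Continuous fun x => fX e t x := fun e =>
    (hfXcont e).comp (continuous_const.prodMk continuous_id)
  have hfcx : ∀ e, Continuous fun x => f t x e := fun e =>
    (hfcont e).comp (continuous_const.prodMk continuous_id)
  -- integration by parts per edge
  have key : ∀ e, (∫ x in (0:ℝ)..l, Real.exp (-η * x) * (2 * f t x e * fX e t x))
      = Real.exp (-η * l) * f t l e ^ 2 - f t 0 e ^ 2
        + η * ∫ x in (0:ℝ)..l, Real.exp (-η * x) * f t x e ^ 2 := by
    intro e
    have hψ : ∀ x : ℝ, HasDerivAt (fun y => Real.exp (-η * y) * f t y e ^ 2)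
        (-η * (Real.exp (-η * x) * f t x e ^ 2)
          + Real.exp (-η * x) * (2 * f t x e * fX e t x)) x := by
      intro x
      have h1 := hexp (-η) x
      have h2 : HasDerivAt (fun y => f t y e ^ 2) (2 * f t x e * fX e t x) x := by
        have h3 := (hX e t x).pow 2
        refine h3.congr_deriv ?_
        push_cast
        ring
      have h4 := h1.mul h2
      refine h4.congr_deriv ?_
      ring
    have hint1 : IntervalIntegrable (fun x => -η * (Real.exp (-η * x) * f t x e ^ 2))
        MeasureTheory.volume 0 l :=
      (continuous_const.mul (hexpc.mul ((hfcx e).pow 2))).intervalIntegrable 0 l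
    have hint2 : IntervalIntegrable (fun x => Real.exp (-η * x) * (2 * f t x e * fX e t x))
        MeasureTheory.volume 0 l :=
      (hexpc.mul ((continuous_const.mul (hfcx e)).mul (hXcont e))).intervalIntegrable 0 l
    have hftc := intervalIntegral.integral_eq_sub_of_hasDerivAt (f' := fun x =>
        -η * (Real.exp (-η * x) * f t x e ^ 2) + Real.exp (-η * x) * (2 * f t x e * fX e t x))
      (fun x _ => hψ x) (hint1.add hint2)
    rw [intervalIntegral.integral_add hint1 hint2, intervalIntegral.integral_const_mul,
      mul_zero, Real.exp_zero] at hftc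
    linear_combination hftc
  -- value of the time-derivative of the integral term
  have hgt_eq : (∫ x in (0:ℝ)..l, ∑ e, p e * Real.exp (-η * x) * (2 * f t x e * fT e t x))
      = ∑ e, (-(v e) * p e) * (Real.exp (-η * l) * f t l e ^ 2 - f t 0 e ^ 2
        + η * ∫ x in (0:ℝ)..l, Real.exp (-η * x) * f t x e ^ 2) := by
    have h1 : (∫ x in (0:ℝ)..l, ∑ e, p e * Real.exp (-η * x) * (2 * f t x e * fT e t x))
        = ∫ x in (0:ℝ)..l,
            ∑ e, (-(v e) * p e) * (Real.exp (-η * x) * (2 * f t x e * fX e t x)) := by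
      apply intervalIntegral.integral_congr
      intro x hx
      rw [Set.uIcc_of_le hl.le] at hx
      apply Finset.sum_congr rfl
      intro e _
      rw [hpde' e t ht x hx]
      ring
    rw [h1, intervalIntegral.integral_finset_sum
      (f := fun e x => (-(v e) * p e) * (Real.exp (-η * x) * (2 * f t x e * fX e t x))) (fun e _ =>
      (continuous_const.mul (hexpc.mul ((continuous_const.mul (hfcx e)).mul
        (hXcont e)))).intervalIntegrable 0 l)]
    apply Finset.sum_congr rfl
    intro e _
    rw [intervalIntegral.integral_const_mul, key e]
  -- derivative of the ODE term
  have hQ : HasDerivAt (fun s => ∑ e, c e * Real.exp (-ηt * v e * s) * q s e ^ 2)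
      (∑ e, (2 * deriv (fun s => q s e) t * c e * Real.exp (-ηt * v e * t) * q t e
        - ηt * v e * c e * Real.exp (-ηt * v e * t) * q t e ^ 2)) t := by
    apply HasDerivAt.fun_sum
    intro e _
    have hqe : HasDerivAt (fun s => q s e) (deriv (fun s => q s e) t) t :=
      ((hq e).differentiable one_ne_zero t).hasDerivAt
    have h2 : HasDerivAt (fun s => q s e ^ 2) (2 * q t e * deriv (fun s => q s e) t) t := by
      have h3 := hqe.pow 2
      refine h3.congr_deriv ?_
      push_cast
      ring
    have h1 : HasDerivAt (fun s => Real.exp (-ηt * v e * s))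
        (-ηt * v e * Real.exp (-ηt * v e * t)) t := hexp (-ηt * v e) t
    have h4 := (h1.const_mul (c e)).mul h2
    refine h4.congr_deriv ?_
    ring
  -- derivative of V
  have hVd : HasDerivAt V
      ((∫ x in (0:ℝ)..l, ∑ e, p e * Real.exp (-η * x) * (2 * f t x e * fT e t x))
        + ∑ e, (2 * deriv (fun s => q s e) t * c e * Real.exp (-ηt * v e * t) * q t e
          - ηt * v e * c e * Real.exp (-ηt * v e * t) * q t e ^ 2)) t := by
    rw [hV]
    exact hIded.add hQ
  -- value of V
  have hVt : V t = (∑ e, p e * ∫ x in (0:ℝ)..l, Real.exp (-η * x) * f t x e ^ 2)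
      + ∑ e, c e * Real.exp (-ηt * v e * t) * q t e ^ 2 := by
    rw [hV]
    show (∫ x in (0:ℝ)..l, ∑ e, p e * Real.exp (-η * x) * f t x e ^ 2)
      + (∑ e, c e * Real.exp (-ηt * v e * t) * q t e ^ 2) = _
    congr 1
    rw [intervalIntegral.integral_finset_sum
      (f := fun e x => p e * Real.exp (-η * x) * f t x e ^ 2) (fun e _ =>
      ((continuous_const.mul hexpc).mul ((hfcx e).pow 2)).intervalIntegrable 0 l)]
    apply Finset.sum_congr rfl
    intro e _
    rw [← intervalIntegral.integral_const_mul]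
    apply intervalIntegral.integral_congr
    intro x _
    ring
  have hIe_nonneg : ∀ e, 0 ≤ ∫ x in (0:ℝ)..l, Real.exp (-η * x) * f t x e ^ 2 := by
    intro e
    apply intervalIntegral.integral_nonneg hl.le
    intro x _
    positivity
  have hν1 : ∀ e, ν ≤ η * v e := fun e => by
    rw [hν]; exact mul_le_mul (min_le_left _ _) (hinf_le e) hinf_pos.le hη.le
  have hν2 : ∀ e, ν ≤ ηt * v e := fun e => by
    rw [hν]; exact mul_le_mul (min_le_right _ _) (hinf_le e) hinf_pos.le hηt.le
  have hbc' := hbc t ht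
  -- assemble
  calc deriv V t
      = (∫ x in (0:ℝ)..l, ∑ e, p e * Real.exp (-η * x) * (2 * f t x e * fT e t x))
        + ∑ e, (2 * deriv (fun s => q s e) t * c e * Real.exp (-ηt * v e * t) * q t e
          - ηt * v e * c e * Real.exp (-ηt * v e * t) * q t e ^ 2) := hVd.deriv
    _ = (-(∑ e, v e * p e * Real.exp (-η * l) * (f t l e) ^ 2)
          + (∑ e, v e * p e * (f t 0 e) ^ 2)
          + 2 * ∑ e, deriv (fun s => q s e) t * c e * Real.exp (-ηt * v e * t) * q t e)
        + ∑ e, (-(η * (v e * (p e * ∫ x in (0:ℝ)..l, Real.exp (-η * x) * f t x e ^ 2)))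
            + -(ηt * (v e * (c e * Real.exp (-ηt * v e * t) * q t e ^ 2)))) := by
      rw [hgt_eq]
      simp only [Finset.mul_sum, ← Finset.sum_neg_distrib, ← Finset.sum_add_distrib]
      apply Finset.sum_congr rfl
      intro e _
      ring
    _ ≤ 0 + ∑ e, (-(η * (v e * (p e * ∫ x in (0:ℝ)..l, Real.exp (-η * x) * f t x e ^ 2)))
            + -(ηt * (v e * (c e * Real.exp (-ηt * v e * t) * q t e ^ 2)))) :=
      add_le_add_left hbc' _
    _ = ∑ e, (-(η * (v e * (p e * ∫ x in (0:ℝ)..l, Real.exp (-η * x) * f t x e ^ 2)))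
            + -(ηt * (v e * (c e * Real.exp (-ηt * v e * t) * q t e ^ 2)))) := zero_add _
    _ ≤ ∑ e, (-(ν * (p e * ∫ x in (0:ℝ)..l, Real.exp (-η * x) * f t x e ^ 2))
            + -(ν * (c e * Real.exp (-ηt * v e * t) * q t e ^ 2))) := by
      apply Finset.sum_le_sum
      intro e _
      have hA : (0:ℝ) ≤ p e * ∫ x in (0:ℝ)..l, Real.exp (-η * x) * f t x e ^ 2 :=
        mul_nonneg (hp e).le (hIe_nonneg e)
      have hB : (0:ℝ) ≤ c e * Real.exp (-ηt * v e * t) * q t e ^ 2 :=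
        mul_nonneg (mul_nonneg (hc e).le (Real.exp_pos _).le) (sq_nonneg _)
      have h1 := mul_le_mul_of_nonneg_right (hν1 e) hA
      have h2 := mul_le_mul_of_nonneg_right (hν2 e) hB
      nlinarith [h1, h2]
    _ = -ν * V t := by
      rw [hVt, Finset.sum_add_distrib, Finset.sum_neg_distrib, Finset.sum_neg_distrib,
        ← Finset.mul_sum, ← Finset.mul_sum]
      ring
end

section
/- Let m ≥ 1, l > 0, velocities v_e > 0, weights p_e, c_e > 0 and rates η, η̃ > 0 for e = 1,…,m. Suppose f : ℝ₊ × [0,l] → ℝ^m is continuously differentiable and satisfies ∂_t f_e + v_e ∂_x f_e = 0 for all e, and q : ℝ₊ → ℝ^m is continuously differentiable. Define V(t) = ∫₀^l Σ_e p_e e^{−ηx} f_e(t,x)² dx + Σ_e c_e e^{−η̃ v_e t} q_e(t)². If for every t ≥ 0 the boundary condition −Σ_e v_e p_e e^{−ηl} f_e(t,l)² + Σ_e v_e p_e f_e(t,0)² + 2 Σ_e q_e′(t) c_e e^{−η̃ v_e t} q_e(t) ≤ 0 holds, then V(t) ≤ e^{−νt} V(0) for all t ≥ 0, where ν = min(η,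 η̃)·min_e v_e. -/
private lemma hasDerivAt_cast {f : ℝ → ℝ} {a b x : ℝ} (h : HasDerivAt f a x) (hab : a = b) :
    HasDerivAt f b x := hab ▸ h

/-- Continuous Lyapunov decay lemma (Lemma 3.1): under the boundary condition,
`V(t) ≤ e^{-νt} V(0)` with `ν = min(η, η̃)·min_e v_e`. -/
theorem continuous_lyapunov_exponential_decay
    (m : ℕ) (hm : 1 ≤ m) (l : ℝ) (hl : 0 < l)
    (v p c : Fin m → ℝ) (hv : ∀ e, 0 < v e) (hp : ∀ e, 0 < p e) (hc : ∀ e, 0 < c e)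
    (η ηt : ℝ) (hη : 0 < η) (hηt : 0 < ηt)
    (f : ℝ → ℝ → Fin m → ℝ) (q : ℝ → Fin m → ℝ)
    (hf : ∀ e, ContDiff ℝ 1 (fun pt : ℝ × ℝ => f pt.1 pt.2 e))
    (hq : ∀ e, ContDiff ℝ 1 (fun t => q t e))
    (hpde : ∀ e, ∀ t ≥ (0:ℝ), ∀ x ∈ Set.Icc (0:ℝ) l,
      deriv (fun s => f s x e) t + v e * deriv (fun y => f t y e) x = 0)
    (V : ℝ → ℝ)
    (hV : V = fun t => (∫ x in (0:ℝ)..l, ∑ e, p e * Real.exp (-η * x) * (f t x e) ^ 2)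
      + ∑ e, c e * Real.exp (-ηt * v e * t) * (q t e) ^ 2)
    (ν : ℝ) (hν : ν = min η ηt * ⨅ e, v e)
    (hbc : ∀ t ≥ (0:ℝ),
      -(∑ e, v e * p e * Real.exp (-η * l) * (f t l e) ^ 2)
      + (∑ e, v e * p e * (f t 0 e) ^ 2)
      + 2 * ∑ e, deriv (fun s => q s e) t * c e * Real.exp (-ηt * v e * t) * q t e ≤ 0) :
    ∀ t ≥ (0:ℝ), V t ≤ Real.exp (-ν * t) * V 0 := by
  haveI : Nonempty (Fin m) := ⟨⟨0, hm⟩⟩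
  -- differentiability basics
  have hFd : ∀ e, Differentiable ℝ (fun pt : ℝ × ℝ => f pt.1 pt.2 e) :=
    fun e => (hf e).differentiable one_ne_zero
  have hfc : ∀ e, Continuous (fun pt : ℝ × ℝ => f pt.1 pt.2 e) := fun e => (hf e).continuous
  set Dt : ℝ → ℝ → Fin m → ℝ :=
    fun t x e => (fderiv ℝ (fun pt : ℝ × ℝ => f pt.1 pt.2 e) (t, x)) (1, 0) with hDtdef
  set Dx : ℝ → ℝ → Fin m → ℝ :=
    fun t x e => (fderiv ℝ (fun pt : ℝ × ℝ => f pt.1 pt.2 e) (t, x)) (0, 1) with hDxdef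
  have hDt : ∀ e t x, HasDerivAt (fun s => f s x e) (Dt t x e) t := by
    intro e t x
    have h1 := (hFd e (t, x)).hasFDerivAt
    have h2 : HasDerivAt (fun s : ℝ => (s, x)) ((1 : ℝ), (0 : ℝ)) t :=
      (hasDerivAt_id t).prodMk (hasDerivAt_const t x)
    exact h1.comp_hasDerivAt t h2
  have hDx : ∀ e t x, HasDerivAt (fun y => f t y e) (Dx t x e) x := by
    intro e t x
    have h1 := (hFd e (t, x)).hasFDerivAt
    have h2 : HasDerivAt (fun y : ℝ => (t, y)) ((0 : ℝ), (1 : ℝ)) x :=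
      (hasDerivAt_const x t).prodMk (hasDerivAt_id x)
    exact h1.comp_hasDerivAt x h2
  have hDtc : ∀ e, Continuous (fun pt : ℝ × ℝ => Dt pt.1 pt.2 e) := fun e =>
    (((hf e).continuous_fderiv one_ne_zero).clm_apply continuous_const)
  have hDxc : ∀ e, Continuous (fun pt : ℝ × ℝ => Dx pt.1 pt.2 e) := fun e =>
    (((hf e).continuous_fderiv one_ne_zero).clm_apply continuous_const)
  -- t-derivative of the integrand
  set gp : ℝ → ℝ → ℝ :=
    fun t x => ∑ e, p e * Real.exp (-η * x) * (2 * f t x e * Dt t x e) with hgpdef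
  have hgd : ∀ (t x : ℝ),
      HasDerivAt (fun s => ∑ e, p e * Real.exp (-η * x) * f s x e ^ 2) (gp t x) t := by
    intro t x
    refine HasDerivAt.fun_sum fun e _ => ?_
    exact hasDerivAt_cast (((hDt e t x).pow 2).const_mul (p e * Real.exp (-η * x)))
      (by push_cast; ring)
  -- joint continuity of integrand and its derivative
  have hgc : Continuous fun pt : ℝ × ℝ => ∑ e, p e * Real.exp (-η * pt.2) * f pt.1 pt.2 e ^ 2 := by
    refine continuous_finset_sum _ fun e _ => ?_
    exact (continuous_const.mul
      (Real.continuous_exp.comp (continuous_const.mul continuous_snd))).mul ((hfc e).pow 2)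
  have hgpc : Continuous fun pt : ℝ × ℝ => gp pt.1 pt.2 := by
    refine continuous_finset_sum _ fun e _ => ?_
    exact (continuous_const.mul
      (Real.continuous_exp.comp (continuous_const.mul continuous_snd))).mul
      ((continuous_const.mul (hfc e)).mul (hDtc e))
  -- derivative of the integral term, via differentiation under the integral sign
  have hI : ∀ t0 : ℝ,
      HasDerivAt (fun s => ∫ x in (0:ℝ)..l, ∑ e, p e * Real.exp (-η * x) * f s x e ^ 2)
        (∫ x in (0:ℝ)..l, gp t0 x) t0 := by
    intro t0
    obtain ⟨M, hM⟩ :=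
      ((isCompact_Icc.prod isCompact_Icc :
          IsCompact ((Set.Icc (t0 - 1) (t0 + 1)) ×ˢ (Set.Icc (0:ℝ) l)))).exists_bound_of_continuousOn
        hgpc.continuousOn
    refine (intervalIntegral.hasDerivAt_integral_of_dominated_loc_of_deriv_le
      (F := fun s x => ∑ e, p e * Real.exp (-η * x) * f s x e ^ 2)
      (F' := fun s x => gp s x) (bound := fun _ => M) (Metric.ball_mem_nhds t0 one_pos) ?_ ?_ ?_ ?_ ?_ ?_).2
    · exact Filter.Eventually.of_forall fun s =>
        ((hgc.comp (continuous_const.prodMk continuous_id)).aestronglyMeasurable)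
    · exact (hgc.comp (continuous_const.prodMk continuous_id)).intervalIntegrable 0 l
    · exact (hgpc.comp (continuous_const.prodMk continuous_id)).aestronglyMeasurable
    · refine MeasureTheory.ae_of_all _ fun x hx s hs => ?_
      rw [Set.uIoc_of_le hl.le] at hx
      rw [Metric.mem_ball, Real.dist_eq] at hs
      have h1 : t0 - 1 ≤ s := by cases abs_lt.1 hs; linarith
      have h2 : s ≤ t0 + 1 := by cases abs_lt.1 hs; linarith
      exact hM (s, x) ⟨⟨h1, h2⟩, ⟨hx.1.le, hx.2⟩⟩
    · exact intervalIntegrable_const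
    · exact MeasureTheory.ae_of_all _ fun x _ s _ => hgd s x
  -- derivative of the queue term
  set Sd : ℝ → ℝ :=
    fun t => ∑ e, (c e * Real.exp (-ηt * v e * t) * (-(ηt * v e)) * q t e ^ 2
      + c e * Real.exp (-ηt * v e * t) * (2 * q t e * deriv (fun s => q s e) t)) with hSddef
  have hqd : ∀ e t0, HasDerivAt (fun s => q s e) (deriv (fun s => q s e) t0) t0 :=
    fun e t0 => (((hq e).differentiable one_ne_zero) t0).hasDerivAt
  have hSd : ∀ t0 : ℝ,
      HasDerivAt (fun t => ∑ e, c e * Real.exp (-ηt * v e * t) * q t e ^ 2) (Sd t0) t0 := by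
    intro t0
    refine HasDerivAt.fun_sum fun e _ => ?_
    have hexp : HasDerivAt (fun s : ℝ => Real.exp (-ηt * v e * s))
        (Real.exp (-ηt * v e * t0) * (-ηt * v e * 1)) t0 :=
      ((hasDerivAt_id t0).const_mul (-ηt * v e)).exp
    exact hasDerivAt_cast ((hexp.const_mul (c e)).mul ((hqd e t0).pow 2)) (by push_cast; ring)
  -- total derivative of V
  have hVd : ∀ t0 : ℝ, HasDerivAt V ((∫ x in (0:ℝ)..l, gp t0 x) + Sd t0) t0 := by
    intro t0
    rw [hV]
    exact (hI t0).add (hSd t0)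
  -- ν bounds
  have hinf0 : (0:ℝ) ≤ ⨅ e, v e := le_ciInf fun e => (hv e).le
  have hinfle : ∀ e, (⨅ e, v e) ≤ v e :=
    fun e => ciInf_le (Set.Finite.bddBelow (Set.finite_range v)) e
  have hν1 : ∀ e, ν ≤ η * v e := fun e => by
    rw [hν]; exact mul_le_mul (min_le_left _ _) (hinfle e) hinf0 hη.le
  have hν2 : ∀ e, ν ≤ ηt * v e := fun e => by
    rw [hν]; exact mul_le_mul (min_le_right _ _) (hinfle e) hinf0 hηt.le
  -- key inequality: derivative ≤ -ν V on [0, ∞)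
  have hDVle : ∀ t ≥ (0:ℝ), (∫ x in (0:ℝ)..l, gp t x) + Sd t ≤ -ν * V t := by
    intro t ht
    set A : Fin m → ℝ := fun e => ∫ x in (0:ℝ)..l, Real.exp (-η * x) * f t x e ^ 2 with hA
    have contA : ∀ e, Continuous fun x => Real.exp (-η * x) * f t x e ^ 2 := fun e =>
      (Real.continuous_exp.comp (continuous_const.mul continuous_id)).mul
        (((hfc e).comp (continuous_const.prodMk continuous_id)).pow 2)
    have contDx : ∀ e, Continuous fun x => Dx t x e := fun e =>
      (hDxc e).comp (continuous_const.prodMk continuous_id)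
    have contH' : ∀ e, Continuous fun x =>
        -η * Real.exp (-η * x) * f t x e ^ 2
          + Real.exp (-η * x) * (2 * f t x e * Dx t x e) := fun e => by
      refine Continuous.add ?_ ?_
      · exact (continuous_const.mul
          (Real.continuous_exp.comp (continuous_const.mul continuous_id))).mul
          (((hfc e).comp (continuous_const.prodMk continuous_id)).pow 2)
      · exact (Real.continuous_exp.comp (continuous_const.mul continuous_id)).mul
          ((continuous_const.mul
            ((hfc e).comp (continuous_const.prodMk continuous_id))).mul (contDx e))
    have hFTC : ∀ e, (∫ x in (0:ℝ)..l,
        (-η * Real.exp (-η * x) * f t x e ^ 2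
          + Real.exp (-η * x) * (2 * f t x e * Dx t x e)))
        = Real.exp (-η * l) * f t l e ^ 2 - Real.exp (-η * 0) * f t 0 e ^ 2 := by
      intro e
      refine intervalIntegral.integral_eq_sub_of_hasDerivAt
        (f := fun x => Real.exp (-η * x) * f t x e ^ 2) (fun x _ => ?_)
        ((contH' e).intervalIntegrable 0 l)
      exact hasDerivAt_cast ((((hasDerivAt_id x).const_mul (-η)).exp).mul ((hDx e t x).pow 2))
        (by simp only [id_eq]; push_cast; ring)
    have hcongr : (∫ x in (0:ℝ)..l, gp t x)
        = ∫ x in (0:ℝ)..l, ∑ e, (-(v e * p e)) *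
            ((-η * Real.exp (-η * x) * f t x e ^ 2
              + Real.exp (-η * x) * (2 * f t x e * Dx t x e))
             + η * (Real.exp (-η * x) * f t x e ^ 2)) := by
      refine intervalIntegral.integral_congr fun x hx => ?_
      rw [Set.uIcc_of_le hl.le] at hx
      refine Finset.sum_congr rfl fun e _ => ?_
      have hp1 := hpde e t ht x hx
      rw [(hDt e t x).deriv, (hDx e t x).deriv] at hp1
      have : Dt t x e = -(v e * Dx t x e) := by linarith
      rw [this]; ring
    have hIeq : (∫ x in (0:ℝ)..l, gp t x)
        = ∑ e, (-(v e * p e)) *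
            ((Real.exp (-η * l) * f t l e ^ 2 - Real.exp (-η * 0) * f t 0 e ^ 2) + η * A e) := by
      rw [hcongr, intervalIntegral.integral_finset_sum
        (f := fun e x => (-(v e * p e)) *
            ((-η * Real.exp (-η * x) * f t x e ^ 2
              + Real.exp (-η * x) * (2 * f t x e * Dx t x e))
             + η * (Real.exp (-η * x) * f t x e ^ 2))) (fun e _ =>
        ((continuous_const.mul ((contH' e).add (continuous_const.mul (contA e)))).intervalIntegrable 0 l))]
      refine Finset.sum_congr rfl fun e _ => ?_
      rw [intervalIntegral.integral_const_mul,
        intervalIntegral.integral_add (g := fun x => η * (Real.exp (-η * x) * f t x e ^ 2))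
          ((contH' e).intervalIntegrable 0 l)
          ((continuous_const.mul (contA e)).intervalIntegrable 0 l),
        hFTC e, intervalIntegral.integral_const_mul]
    have hVt : V t = (∑ e, p e * A e) + ∑ e, c e * Real.exp (-ηt * v e * t) * q t e ^ 2 := by
      simp only [hV]
      congr 1
      rw [intervalIntegral.integral_finset_sum
        (f := fun e x => p e * Real.exp (-η * x) * f t x e ^ 2) (fun e _ =>
        (((continuous_const.mul (Real.continuous_exp.comp
          (continuous_const.mul continuous_id))).mul
          (((hfc e).comp (continuous_const.prodMk continuous_id)).pow 2)).intervalIntegrable 0 l))]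
      refine Finset.sum_congr rfl fun e _ => ?_
      have heq : (fun x => p e * Real.exp (-η * x) * f t x e ^ 2)
          = fun x => p e * (Real.exp (-η * x) * f t x e ^ 2) := by funext x; ring
      rw [heq, intervalIntegral.integral_const_mul]
    have hAnn : ∀ e, 0 ≤ A e := fun e =>
      intervalIntegral.integral_nonneg hl.le fun x _ => by positivity
    have hqnn : ∀ e, 0 ≤ c e * Real.exp (-ηt * v e * t) * q t e ^ 2 := fun e => by
      have := (hc e).le; positivity
    have hbc' := hbc t ht
    rw [hIeq, hVt]
    simp only [mul_zero, Real.exp_zero]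
    -- massage both sides into sums and compare
    have key : (∑ e, (-(v e * p e)) *
            ((Real.exp (-η * l) * f t l e ^ 2 - 1 * f t 0 e ^ 2) + η * A e))
        + Sd t
        = (-(∑ e, v e * p e * Real.exp (-η * l) * f t l e ^ 2)
            + (∑ e, v e * p e * f t 0 e ^ 2)
            + 2 * ∑ e, deriv (fun s => q s e) t * c e * Real.exp (-ηt * v e * t) * q t e)
          + ((∑ e, (-(η * v e)) * (p e * A e))
            + ∑ e, (-(ηt * v e)) * (c e * Real.exp (-ηt * v e * t) * q t e ^ 2)) := by
      simp only [hSddef, Finset.mul_sum, ← Finset.sum_neg_distrib, ← Finset.sum_add_distrib]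
      refine Finset.sum_congr rfl fun e _ => ?_
      ring
    rw [key]
    have hR1 : (∑ e, (-(η * v e)) * (p e * A e)) ≤ ∑ e, -ν * (p e * A e) := by
      refine Finset.sum_le_sum fun e _ => ?_
      nlinarith [mul_nonneg (sub_nonneg.mpr (hν1 e)) (mul_nonneg (hp e).le (hAnn e))]
    have hR2 : (∑ e, (-(ηt * v e)) * (c e * Real.exp (-ηt * v e * t) * q t e ^ 2))
        ≤ ∑ e, -ν * (c e * Real.exp (-ηt * v e * t) * q t e ^ 2) := by
      refine Finset.sum_le_sum fun e _ => ?_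
      nlinarith [mul_nonneg (sub_nonneg.mpr (hν2 e)) (hqnn e)]
    have h3 : -ν * ((∑ e, p e * A e) + ∑ e, c e * Real.exp (-ηt * v e * t) * q t e ^ 2)
        = (∑ e, -ν * (p e * A e))
          + ∑ e, -ν * (c e * Real.exp (-ηt * v e * t) * q t e ^ 2) := by
      rw [mul_add, Finset.mul_sum, Finset.mul_sum]
    linarith [hbc']
  -- Grönwall / monotonicity argument
  have hW : ∀ t0 : ℝ, HasDerivAt (fun s => Real.exp (ν * s) * V s)
      (ν * Real.exp (ν * t0) * V t0
        + Real.exp (ν * t0) * ((∫ x in (0:ℝ)..l, gp t0 x) + Sd t0)) t0 := by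
    intro t0
    exact hasDerivAt_cast
      (((((hasDerivAt_id t0).const_mul ν).exp).mul (hVd t0))) (by simp only [id_eq]; ring)
  have hanti : AntitoneOn (fun s => Real.exp (ν * s) * V s) (Set.Ici (0:ℝ)) := by
    refine antitoneOn_of_deriv_nonpos (convex_Ici 0) ?_ ?_ ?_
    · exact fun s _ => ((hW s).continuousAt).continuousWithinAt
    · exact fun s hs => (hW s).differentiableAt.differentiableWithinAt
    · intro s hs
      rw [interior_Ici] at hs
      rw [(hW s).deriv]
      have hle := hDVle s (le_of_lt hs)
      nlinarith [Real.exp_pos (ν * s)]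
  intro t ht
  have h1 : Real.exp (ν * t) * V t ≤ Real.exp (ν * 0) * V 0 :=
    hanti (Set.mem_Ici.2 le_rfl) (Set.mem_Ici.2 ht) ht
  simp only [mul_zero, Real.exp_zero, one_mul] at h1
  have hE : Real.exp (-ν * t) * Real.exp (ν * t) = 1 := by
    rw [← Real.exp_add, neg_mul, neg_add_cancel, Real.exp_zero]
  have h2 := mul_le_mul_of_nonneg_left h1 (Real.exp_pos (-ν * t)).le
  rw [← mul_assoc, hE, one_mul] at h2
  exact h2
end

section
/- Fix m, N ≥ 1, h, τ > 0, v_e > 0, p_e, c_e > 0, η_e, η̃_e > 0, cell centers x_{e,j} = x_{e,0} + jh, a time index k with t_k = kτ, and reals f_{e,j} (j = 0,…,N−1) and q_e. Assume the CFL condition max_e v_e · τ/h ≤ 1. Then Σ_{e=1}^m v_e (e^{−η_e h} − 1) Σ_{j=0}^{N−1} (f_{e,j})² p_e e^{−η_e x_{e,j}} + Σ_{e=1}^m (q_e)² c_e e^{−η̃_e v_e t_k} (e^{−η̃_e v_e τ} − 1)/τ ≤ −ν V, where V = Σ_{j=0}^{N−1} Σ_{e=1}^m (f_{e,j})² p_e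 e^{−η_e x_{e,j}} h + Σ_{e=1}^m (q_e)² c_e e^{−η̃_e v_e t_k} and ν = min{ (1/h) min_e v_e(1−e^{−η_e h}), (1/h) max_e v_e · min_e(1−e^{−η̃_e v_e τ}) }. -/
/-- The interior damping estimate `S₁ + Z₁ ≤ −ν V^k` from the proof of Theorem 4.1,
where the CFL condition bounds the factor `1/τ` of the queue damping term by
`max_e(v_e)/h`. -/
theorem interior_damping_estimate
    (m N : ℕ) (hm : 1 ≤ m) (hN : 1 ≤ N)
    (h τ : ℝ) (hh : 0 < h) (hτ : 0 < τ)
    (v p c η ηt x0 : Fin m → ℝ)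
    (hv : ∀ e, 0 < v e) (hp : ∀ e, 0 < p e) (hc : ∀ e, 0 < c e)
    (hη : ∀ e, 0 < η e) (hηt : ∀ e, 0 < ηt e)
    (k : ℕ)
    (f : ℤ → Fin m → ℝ) (q : Fin m → ℝ)
    (hcfl : (⨆ e, v e) * τ / h ≤ 1)
    (V : ℝ)
    (hV : V = (∑ j ∈ Finset.range N, ∑ e,
        (f (j : ℤ) e) ^ 2 * p e * Real.exp (-η e * (x0 e + (j : ℝ) * h)) * h)
      + ∑ e, (q e) ^ 2 * c e * Real.exp (-ηt e * v e * (k * τ)))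
    (ν : ℝ)
    (hν : ν = min (1 / h * ⨅ e, v e * (1 - Real.exp (-η e * h)))
              (1 / h * (⨆ e, v e) * ⨅ e, (1 - Real.exp (-ηt e * v e * τ)))) :
    (∑ e, v e * (Real.exp (-η e * h) - 1) *
        ∑ j ∈ Finset.range N, (f (j : ℤ) e) ^ 2 * p e * Real.exp (-η e * (x0 e + (j : ℝ) * h)))
      + ∑ e, (q e) ^ 2 * c e * Real.exp (-ηt e * v e * (k * τ))
          * (Real.exp (-ηt e * v e * τ) - 1) / τ
    ≤ -ν * V := by
  haveI : Nonempty (Fin m) := ⟨⟨0, hm⟩⟩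
  set A : Fin m → ℝ := fun e => ∑ j ∈ Finset.range N,
      (f (j : ℤ) e) ^ 2 * p e * Real.exp (-η e * (x0 e + (j : ℝ) * h)) with hA
  set B : Fin m → ℝ := fun e => (q e) ^ 2 * c e * Real.exp (-ηt e * v e * (k * τ)) with hB
  have hA0 : ∀ e, 0 ≤ A e := fun e => Finset.sum_nonneg fun j _ =>
    mul_nonneg (mul_nonneg (sq_nonneg _) (hp e).le) (Real.exp_pos _).le
  have hB0 : ∀ e, 0 ≤ B e := fun e =>
    mul_nonneg (mul_nonneg (sq_nonneg _) (hc e).le) (Real.exp_pos _).le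
  have hVeq : V = ∑ e, A e * h + ∑ e, B e := by
    rw [hV, Finset.sum_comm]
    simp [hA, Finset.sum_mul]
  have hS0 : (0 : ℝ) < ⨆ e, v e :=
    lt_of_lt_of_le (hv ⟨0, hm⟩)
      (le_ciSup (Set.Finite.bddAbove (Set.finite_range v)) _)
  have hSτ : (⨆ e, v e) * τ ≤ h := by
    rw [div_le_one hh] at hcfl; exact hcfl
  -- edge bound
  have hedge : ∀ e, v e * (Real.exp (-η e * h) - 1) * A e ≤ -ν * (A e * h) := by
    intro e
    have h1 : ν * h ≤ v e * (1 - Real.exp (-η e * h)) := by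
      have h2 : ν ≤ 1 / h * ⨅ e, v e * (1 - Real.exp (-η e * h)) := by
        rw [hν]; exact min_le_left _ _
      have h3 : (⨅ e, v e * (1 - Real.exp (-η e * h))) ≤ v e * (1 - Real.exp (-η e * h)) :=
        ciInf_le (Set.Finite.bddBelow (Set.finite_range _)) e
      have := mul_le_mul_of_nonneg_right h2 hh.le
      rw [one_div, inv_mul_eq_div, div_mul_cancel₀] at this
      · linarith
      · exact hh.ne'
    nlinarith [hA0 e]
  -- queue bound
  have hqueue : ∀ e, B e * (Real.exp (-ηt e * v e * τ) - 1) / τ ≤ -ν * B e := by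
    intro e
    have hI0 : (0 : ℝ) ≤ ⨅ e, (1 - Real.exp (-ηt e * v e * τ)) := by
      apply le_ciInf
      intro i
      have : Real.exp (-ηt i * v i * τ) < 1 := by
        rw [Real.exp_lt_one_iff]
        have := mul_pos (mul_pos (hηt i) (hv i)) hτ
        linarith
      linarith
    have hI : (⨅ e, (1 - Real.exp (-ηt e * v e * τ))) ≤ 1 - Real.exp (-ηt e * v e * τ) :=
      ciInf_le (Set.Finite.bddBelow (Set.finite_range _)) e
    have hν2 : ν ≤ 1 / h * (⨆ e, v e) * ⨅ e, (1 - Real.exp (-ηt e * v e * τ)) := by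
      rw [hν]; exact min_le_right _ _
    have hfrac : 1 / h * (⨆ e, v e) ≤ 1 / τ := by
      rw [one_div, inv_mul_eq_div, div_le_div_iff₀ hh hτ]
      linarith
    have hν3 : ν ≤ 1 / τ * (1 - Real.exp (-ηt e * v e * τ)) := by
      calc ν ≤ 1 / h * (⨆ e, v e) * ⨅ e, (1 - Real.exp (-ηt e * v e * τ)) := hν2
        _ ≤ 1 / τ * ⨅ e, (1 - Real.exp (-ηt e * v e * τ)) :=
            mul_le_mul_of_nonneg_right hfrac hI0
        _ ≤ 1 / τ * (1 - Real.exp (-ηt e * v e * τ)) :=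
            mul_le_mul_of_nonneg_left hI (by positivity)
    have hτ' : (0:ℝ) < 1/τ := by positivity
    have := mul_le_mul_of_nonneg_left hν3 (hB0 e)
    have hexp : B e * (Real.exp (-ηt e * v e * τ) - 1) / τ
        = - (B e * (1 / τ * (1 - Real.exp (-ηt e * v e * τ)))) := by ring
    rw [hexp]
    nlinarith
  calc (∑ e, v e * (Real.exp (-η e * h) - 1) * A e)
      + ∑ e, B e * (Real.exp (-ηt e * v e * τ) - 1) / τ
      ≤ (∑ e, -ν * (A e * h)) + ∑ e, -ν * B e := by
        exact add_le_add (Finset.sum_le_sum fun e _ => hedge e)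
          (Finset.sum_le_sum fun e _ => hqueue e)
    _ = -ν * V := by
        rw [hVeq, mul_add, Finset.mul_sum, Finset.mul_sum]
end

section
/- Fix m ≥ 1, v_e > 0 and η̃_e > 0 for e = 1,…,m, and for h > 0 set τ(h) = h / max_e v_e (CFL condition with equality). Then the discrete decay rate ν₂(h) = (1/h) · max_e(v_e) · min_e ( 1 − e^{−η̃_e v_e τ(h)} ) converges to min_e (v_e η̃_e) as h → 0⁺. -/
open Real Filter Set

/-- Second half of Corollary 4.2: the queue part of the numerical decay rate under the
CFL condition with equality `τ(h) = h / max_e v_e`,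
`ν₂(h) = (1/h) max_e(v_e) min_e(1 − e^{−η̃_e v_e τ(h)})`, converges to `min_e (v_e η̃_e)`
as `h → 0⁺`. -/
theorem decay_rate_queue_convergence
    (m : ℕ) (hm : 1 ≤ m) (v ηt : Fin m → ℝ)
    (hv : ∀ e, 0 < v e) (hηt : ∀ e, 0 < ηt e) :
    Filter.Tendsto
      (fun h : ℝ => 1 / h * (⨆ e, v e) *
        ⨅ e, (1 - Real.exp (-ηt e * v e * (h / ⨆ e', v e'))))
      (nhdsWithin 0 (Set.Ioi 0)) (nhds (⨅ e, v e * ηt e)) := by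
  haveI : Nonempty (Fin m) := ⟨⟨0, hm⟩⟩
  set V : ℝ := ⨆ e, v e with hV
  have hVpos : 0 < V := lt_of_lt_of_le (hv ⟨0, hm⟩) (le_ciSup (Set.finite_range v).bddAbove _)
  set A : ℝ := ⨅ e, v e * ηt e with hA
  -- rewrite the infimum
  have key : ∀ h : ℝ, 0 < h →
      (⨅ e, (1 - Real.exp (-ηt e * v e * (h / V)))) = 1 - Real.exp (-(A / V) * h) := by
    intro h hh
    have hc : 0 ≤ h / V := le_of_lt (div_pos hh hVpos)
    have mono : Monotone (fun x : ℝ => 1 - Real.exp (-x * (h / V))) := by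
      intro a b hab
      simp only
      have : Real.exp (-b * (h/V)) ≤ Real.exp (-a * (h/V)) := by
        apply Real.exp_le_exp.2
        nlinarith
      linarith
    have := mono.map_ciInf_of_continuousAt (g := fun e => v e * ηt e)
      (by fun_prop) (Set.finite_range _).bddBelow
    rw [show (-(A/V) * h) = -A * (h/V) by field_simp, this]
    congr 1
    ext e
    congr 2
    ring
  -- derivative argument
  have hd : HasDerivAt (fun h : ℝ => 1 - Real.exp (-(A / V) * h)) (A / V) 0 := by
    have h1 : HasDerivAt (fun h : ℝ => -(A / V) * h) (-(A / V)) 0 := by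
      simpa using (hasDerivAt_id (0:ℝ)).const_mul (-(A / V))
    have h2 := h1.exp
    simpa using h2.const_sub 1
  have hslope := hasDerivAt_iff_tendsto_slope.1 hd
  have hslope' : Tendsto (fun h : ℝ => (1 - Real.exp (-(A / V) * h)) / h)
      (nhdsWithin 0 (Set.Ioi 0)) (nhds (A / V)) := by
    have := hslope.mono_left (nhdsWithin_mono 0 (by intro x hx; exact ne_of_gt hx))
    refine this.congr' ?_
    filter_upwards [self_mem_nhdsWithin] with h hh
    simp [slope, hh, div_eq_inv_mul]
  have final := hslope'.const_mul V
  have : V * (A / V) = A := by field_simp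
  rw [this] at final
  refine final.congr' ?_
  filter_upwards [self_mem_nhdsWithin] with h hh
  rw [key h hh]
  ring
end

section
/- Fix m ≥ 1, v_e > 0 for e = 1,…,m and η > 0, η̃ > 0, with η_e = η and η̃_e = η̃ for all e; for h > 0 set τ(h) = h / max_e v_e. Then the numerical decay rate ν(h) = min{ (1/h) min_e v_e(1−e^{−η h}), (1/h) max_e(v_e) min_e(1−e^{−η̃ v_e τ(h)}) } converges to the analytical decay rate min(η, η̃)·min_e v_e as h → 0⁺. -/
open Filter Real

lemma tendsto_one_sub_exp_div (a : ℝ) :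
    Tendsto (fun h : ℝ => (1 - Real.exp (-a * h)) / h) (nhdsWithin 0 (Set.Ioi 0)) (nhds a) := by
  have hd : HasDerivAt (fun h : ℝ => 1 - Real.exp (-a * h)) a 0 := by
    have h1 : HasDerivAt (fun h : ℝ => -a * h) (-a) 0 := by
      simpa using (hasDerivAt_id (0 : ℝ)).const_mul (-a)
    have h2 := h1.exp
    have h3 := h2.const_sub 1
    simpa using h3
  have hslope := hasDerivAt_iff_tendsto_slope.mp hd
  have hmono : nhdsWithin (0 : ℝ) (Set.Ioi 0) ≤ nhdsWithin 0 {0}ᶜ :=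
    nhdsWithin_mono 0 (fun x hx => ne_of_gt hx)
  have := hslope.mono_left hmono
  refine this.congr (fun h => ?_)
  simp [slope_def_field, div_eq_mul_inv, mul_comm]

/-- Corollary 4.2: with `η_e = η`, `η̃_e = η̃` and the CFL condition satisfied with
equality `τ(h) = h / max_e v_e`, the numerical decay rate `ν(h) = min(ν₁(h), ν₂(h))`
converges to the analytical decay rate `min(η, η̃)·min_e v_e` as `h → 0⁺`. -/
theorem decay_rate_convergence
    (m : ℕ) (hm : 1 ≤ m) (v : Fin m → ℝ) (hv : ∀ e, 0 < v e)
    (η ηt : ℝ) (hη : 0 < η) (hηt : 0 < ηt) :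
    Filter.Tendsto
      (fun h : ℝ =>
        min (1 / h * ⨅ e, v e * (1 - Real.exp (-η * h)))
            (1 / h * (⨆ e, v e) *
              ⨅ e, (1 - Real.exp (-ηt * v e * (h / ⨆ e', v e')))))
      (nhdsWithin 0 (Set.Ioi 0)) (nhds (min η ηt * ⨅ e, v e)) := by
  haveI : Nonempty (Fin m) := Fin.pos_iff_nonempty.mp hm
  obtain ⟨e0, he0⟩ := Finite.exists_min v
  obtain ⟨e1, he1⟩ := Finite.exists_max v
  have hinf : (⨅ e, v e) = v e0 :=
    le_antisymm (ciInf_le (Finite.bddBelow_range v) e0) (le_ciInf he0)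
  have hsup : (⨆ e, v e) = v e1 :=
    le_antisymm (ciSup_le he1) (le_ciSup (Finite.bddAbove_range v) e1)
  have hv0 := hv e0
  have hv1 := hv e1
  -- limit of the simplified function
  have limG : Tendsto
      (fun h : ℝ => min (v e0 * ((1 - Real.exp (-η * h)) / h))
        (v e1 * ((1 - Real.exp (-(ηt * v e0 / v e1) * h)) / h)))
      (nhdsWithin 0 (Set.Ioi 0))
      (nhds (min (v e0 * η) (v e1 * (ηt * v e0 / v e1)))) := by
    exact Tendsto.min
      (((tendsto_one_sub_exp_div η).const_mul (v e0)))
      (((tendsto_one_sub_exp_div (ηt * v e0 / v e1)).const_mul (v e1)))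
  have hval : min (v e0 * η) (v e1 * (ηt * v e0 / v e1)) = min η ηt * ⨅ e, v e := by
    rw [hinf]
    rw [mul_div_assoc', mul_comm (v e1), mul_div_assoc, div_self hv1.ne', mul_one]
    rcases le_total η ηt with hle | hle
    · rw [min_eq_left hle, min_eq_left (by nlinarith), mul_comm]
    · rw [min_eq_right hle, min_eq_right (by nlinarith), mul_comm]
  rw [← hval]
  refine limG.congr' ?_
  filter_upwards [self_mem_nhdsWithin] with h (hh : 0 < h)
  have hexp : (0:ℝ) < 1 - Real.exp (-η * h) := by
    have : Real.exp (-η * h) < 1 := by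
      rw [Real.exp_lt_one_iff]
      nlinarith
    linarith
  have hinf1 : (⨅ e, v e * (1 - Real.exp (-η * h))) = v e0 * (1 - Real.exp (-η * h)) := by
    refine le_antisymm (ciInf_le (Finite.bddBelow_range _) e0) (le_ciInf fun e => ?_)
    exact mul_le_mul_of_nonneg_right (he0 e) hexp.le
  have hinf2 : (⨅ e, (1 - Real.exp (-ηt * v e * (h / ⨆ e', v e')))) =
      1 - Real.exp (-ηt * v e0 * (h / v e1)) := by
    simp only [hsup]
    refine le_antisymm (ciInf_le (Finite.bddBelow_range _) e0) (le_ciInf fun e => ?_)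
    have : Real.exp (-ηt * v e * (h / v e1)) ≤ Real.exp (-ηt * v e0 * (h / v e1)) := by
      apply Real.exp_le_exp.mpr
      have hpos : 0 < h / v e1 := div_pos hh hv1
      nlinarith [he0 e, mul_nonneg (mul_pos hηt hpos).le (sub_nonneg.mpr (he0 e))]
    linarith
  have harg : -ηt * v e0 * (h / v e1) = -(ηt * v e0 / v e1) * h := by ring
  rw [hinf1, hinf2, hsup, harg]
  congr 1 <;> ring
end
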